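/- arXiv:2407.17736 — 2 statements merged into one kernel-verified Lean document; each statement's English description precedes it below -/
import Mathlib

section
/- If v is a positive C² function on Ω with eigenvalue vector of A(v) in the Gårding cone Γ_k at every point, then for every 1 ≤ m ≤ k, S_m(v) ≤ v^m·σ_m(λ(∇²v)) pointwise; in particular σ_m(λ(∇²v)) ≥ 0 for all 0 ≤ m ≤ k. -/
open scoped BigOperators Classical
open MeasureTheory

noncomputable section

abbrev E (n : ℕ) := EuclideanSpace ℝ (Fin n)

/-- k-th elementary symmetric polynomial of a vector in ℝⁿ. -/
def esymm (n k : ℕ) (lam : Fin n → ℝ) : ℝ :=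
  ∑ s ∈ Finset.univ.powersetCard k, ∏ i ∈ s, lam i

/-- Eigenvalue vector of a real symmetric matrix (junk value 0 otherwise). -/
def eigs {n : ℕ} (M : Matrix (Fin n) (Fin n) ℝ) : Fin n → ℝ :=
  if h : M.IsHermitian then h.eigenvalues else 0

/-- σ_k of the eigenvalues of a symmetric matrix. -/
def Sk (n k : ℕ) (M : Matrix (Fin n) (Fin n) ℝ) : ℝ := esymm n k (eigs M)

/-- The (closed) Gårding cone Γ_k. -/
def GammaK (n k : ℕ) : Set (Fin n → ℝ) :=
  {lam | ∀ i, 1 ≤ i → i ≤ k → 0 ≤ esymm n i lam}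

/-- i-th partial derivative. -/
def pd {n : ℕ} (u : E n → ℝ) (i : Fin n) (x : E n) : ℝ :=
  fderiv ℝ u x (EuclideanSpace.single i 1)

/-- Hessian matrix. -/
def hess {n : ℕ} (u : E n → ℝ) (x : E n) : Matrix (Fin n) (Fin n) ℝ :=
  Matrix.of fun i j => pd (fun y => pd u j y) i x

/-- |∇u|². -/
def gradsq {n : ℕ} (u : E n → ℝ) (x : E n) : ℝ := ∑ i, (pd u i x) ^ 2

/-- The conformal Schouten-type matrix A_{ij}(u) = u u_{ij} - (1/2)|∇u|² δ_{ij}. -/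
def Amat {n : ℕ} (u : E n → ℝ) (x : E n) : Matrix (Fin n) (Fin n) ℝ :=
  Matrix.of fun i j => u x * hess u x i j - (1 / 2) * gradsq u x * (if i = j then 1 else 0)

/-!
Write `A(v) = v ∇²v - b I` with `b = |∇v|²/2 ≥ 0`. Then `A(v)` is a function of `∇²v`, so its
eigenvalues are `μᵢ = v λᵢ - b` with `λ = λ(∇²v)`, and `v^m σ_m(λ) = σ_m(μ + b)`. Expanding
`σ_m(μ + b) = Σ_{j ≤ m} C(n-j, m-j) b^(m-j) σ_j(μ)`, every term is nonnegative when `μ ∈ Γ_k` and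
`m ≤ k`, and the term `j = m` is `σ_m(μ) = S_m(v)`.
-/

open Finset

lemma esymm_zero (n : ℕ) (f : Fin n → ℝ) : esymm n 0 f = 1 := by
  simp [esymm]

lemma esymm_const_mul (n m : ℕ) (c : ℝ) (f : Fin n → ℝ) :
    esymm n m (fun i => c * f i) = c ^ m * esymm n m f := by
  rw [esymm, esymm, mul_sum]
  refine sum_congr rfl fun S hS => ?_
  rw [prod_mul_distrib, prod_const, (mem_powersetCard.mp hS).2]

lemma esymm_eq_of_map_univ_eq {n : ℕ} (m : ℕ) {f g : Fin n → ℝ}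
    (h : univ.val.map f = univ.val.map g) : esymm n m f = esymm n m g := by
  rw [esymm, esymm, ← esymm_map_val, ← esymm_map_val, h]

lemma esymm_add_const (n m : ℕ) (f : Fin n → ℝ) (b : ℝ) :
    esymm n m (fun i => f i + b) =
      ∑ j ∈ range (m + 1), ((n - j).choose (m - j) : ℝ) * b ^ (m - j) * esymm n j f := by
  calc esymm n m (fun i => f i + b)
      = ∑ S ∈ univ.powersetCard m, ∑ j ∈ range (m + 1), ∑ T ∈ S.powersetCard j,
          (∏ i ∈ T, f i) * b ^ (m - j) := by
        refine sum_congr rfl fun S hS => ?_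
        obtain ⟨-, hS⟩ := mem_powersetCard.1 hS
        rw [prod_add, sum_powerset, hS]
        refine sum_congr rfl fun j _ => sum_congr rfl fun T hT => ?_
        obtain ⟨hTS, hT⟩ := mem_powersetCard.1 hT
        rw [prod_const, card_sdiff_of_subset hTS, hS, hT]
    _ = ∑ j ∈ range (m + 1), ∑ T ∈ univ.powersetCard j,
          ∑ S ∈ (univ.powersetCard m).filter (T ⊆ ·), (∏ i ∈ T, f i) * b ^ (m - j) := by
        rw [sum_comm]
        refine sum_congr rfl fun j _ => sum_comm' fun S T => ?_
        simp only [mem_powersetCard, mem_filter, subset_univ, true_and]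
        tauto
    _ = _ := by
        refine sum_congr rfl fun j hj => ?_
        rw [esymm, mul_sum]
        refine sum_congr rfl fun T hT => ?_
        have hT := (mem_powersetCard.1 hT).2
        rw [sum_const, card_filter_powersetCard_subset _ _ _ (subset_univ T)
          (hT ▸ Nat.lt_succ_iff.mp (mem_range.mp hj)), hT, card_univ, Fintype.card_fin,
          nsmul_eq_mul]
        ring

lemma esymm_le_esymm_add_const {n m : ℕ} {f : Fin n → ℝ} {b : ℝ} (hb : 0 ≤ b)
    (hf : ∀ j ≤ m, 0 ≤ esymm n j f) :
    esymm n m f ≤ esymm n m (fun i => f i + b) := by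
  rw [esymm_add_const]
  calc esymm n m f = ((n - m).choose (m - m) : ℝ) * b ^ (m - m) * esymm n m f := by simp
    _ ≤ _ := single_le_sum
        (f := fun j => ((n - j).choose (m - j) : ℝ) * b ^ (m - j) * esymm n j f)
        (fun j hj => by have := hf j (Nat.lt_succ_iff.mp (mem_range.mp hj)); positivity)
        (self_mem_range_succ m)

lemma esymm_nonneg_of_mem_GammaK {n k : ℕ} {f : Fin n → ℝ} (hf : f ∈ GammaK n k) :
    ∀ j ≤ k, 0 ≤ esymm n j f
  | 0, _ => by rw [esymm_zero]; exact zero_le_one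
  | j + 1, hj => hf (j + 1) j.succ_pos hj

lemma Matrix.IsHermitian.map_eigenvalues_cfc {ι 𝕜 : Type*} [RCLike 𝕜] [Fintype ι]
    [DecidableEq ι] {A : Matrix ι ι 𝕜} (hA : A.IsHermitian) (f : ℝ → ℝ)
    (hB : (cfc f A).IsHermitian) :
    univ.val.map hB.eigenvalues = univ.val.map (f ∘ hA.eigenvalues) := by
  have h := hB.roots_charpoly_eq_eigenvalues
  rw [hA.charpoly_cfc_eq, Polynomial.roots_prod _ _
    (by simp [prod_ne_zero_iff, Polynomial.X_sub_C_ne_zero])] at h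
  simp only [Polynomial.roots_X_sub_C, Multiset.bind_singleton] at h
  refine Multiset.map_injective (RCLike.ofReal_injective (K := 𝕜)) ?_
  rw [Multiset.map_map, Multiset.map_map, ← h]
  rfl

lemma eigs_of_isHermitian {n : ℕ} {M : Matrix (Fin n) (Fin n) ℝ} (hM : M.IsHermitian) :
    eigs M = hM.eigenvalues :=
  dif_pos hM

lemma Sk_cfc {n : ℕ} (m : ℕ) {M : Matrix (Fin n) (Fin n) ℝ} (hM : M.IsHermitian)
    (f : ℝ → ℝ) :
    Sk n m (cfc f M) = esymm n m (f ∘ eigs M) := by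
  have hB : (cfc f M).IsHermitian := cfc_predicate f M
  rw [Sk, eigs_of_isHermitian hB, eigs_of_isHermitian hM]
  exact esymm_eq_of_map_univ_eq m (hM.map_eigenvalues_cfc f hB)

lemma Sk_smul_sub_le {n m : ℕ} {H : Matrix (Fin n) (Fin n) ℝ} (hH : H.IsHermitian) (c : ℝ)
    {b : ℝ} (hb : 0 ≤ b) (hA : ∀ j ≤ m, 0 ≤ Sk n j (c • H - b • 1)) :
    Sk n m (c • H - b • 1) ≤ c ^ m * Sk n m H := by
  have hcfc : c • H - b • 1 = cfc (fun t => c * t - b) H := by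
    have hH' : IsSelfAdjoint H := hH
    rw [cfc_sub _ _ H, cfc_const_mul _ _ H, cfc_id' ℝ H, cfc_const b H,
      Algebra.algebraMap_eq_smul_one]
  simp only [hcfc, Sk_cfc _ hH] at hA ⊢
  calc esymm n m ((fun t => c * t - b) ∘ eigs H)
      ≤ esymm n m (fun i => c * eigs H i - b + b) := esymm_le_esymm_add_const hb hA
    _ = c ^ m * Sk n m H := by
        simp only [sub_add_cancel]
        exact esymm_const_mul n m c _

lemma hess_eq_fderiv_fderiv {n : ℕ} {u : E n → ℝ} {x : E n} (hu : ContDiffAt ℝ 2 u x)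
    (i j : Fin n) :
    hess u x i j
      = fderiv ℝ (fderiv ℝ u) x (EuclideanSpace.single i 1) (EuclideanSpace.single j 1) := by
  have hdiff : DifferentiableAt ℝ (fderiv ℝ u) x :=
    (hu.fderiv_right (m := 1) le_rfl).differentiableAt one_ne_zero
  change fderiv ℝ (fun y => fderiv ℝ u y (EuclideanSpace.single j 1)) x _ = _
  rw [fderiv_clm_apply hdiff (differentiableAt_const _)]
  simp

lemma hess_isHermitian {n : ℕ} {u : E n → ℝ} {x : E n} (hu : ContDiffAt ℝ 2 u x) :
    (hess u x).IsHermitian := by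
  have hsym : IsSymmSndFDerivAt ℝ u x :=
    hu.isSymmSndFDerivAt (by simp [minSmoothness_of_isRCLikeNormedField])
  ext i j
  rw [Matrix.conjTranspose_apply, star_trivial, hess_eq_fderiv_fderiv hu,
    hess_eq_fderiv_fderiv hu]
  exact hsym _ _

lemma Amat_eq_smul_hess_sub {n : ℕ} (u : E n → ℝ) (x : E n) :
    Amat u x = u x • hess u x - (gradsq u x / 2) • 1 := by
  ext i j
  by_cases h : i = j <;> simp [Amat, h, div_eq_inv_mul]

lemma gradsq_nonneg {n : ℕ} (u : E n → ℝ) (x : E n) : 0 ≤ gradsq u x :=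
  sum_nonneg fun _ _ => sq_nonneg _

theorem stmt7_general (n k : ℕ)
    (Ω : Set (E n)) (hΩ : IsOpen Ω) (v : E n → ℝ)
    (hv : ContDiffOn ℝ 2 v Ω) (hvpos : ∀ x ∈ Ω, 0 < v x)
    (hvG : ∀ x ∈ Ω, eigs (Amat v x) ∈ GammaK n k) :
    ∀ x ∈ Ω,
      (∀ m, 1 ≤ m → m ≤ k → Sk n m (Amat v x) ≤ v x ^ m * Sk n m (hess v x)) ∧
      (∀ m, m ≤ k → 0 ≤ Sk n m (hess v x)) := by
  intro x hx
  have hH := hess_isHermitian (hv.contDiffAt (hΩ.mem_nhds hx))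
  have hA : ∀ j ≤ k, 0 ≤ Sk n j (Amat v x) := esymm_nonneg_of_mem_GammaK (hvG x hx)
  have hSk_le : ∀ m ≤ k, Sk n m (Amat v x) ≤ v x ^ m * Sk n m (hess v x) := by
    intro m hm
    rw [Amat_eq_smul_hess_sub] at hA ⊢
    exact Sk_smul_sub_le hH _ (by linarith [gradsq_nonneg v x]) fun j hj => hA j (hj.trans hm)
  exact ⟨fun m _ hm => hSk_le m hm, fun m hm =>
    nonneg_of_mul_nonneg_right ((hA m hm).trans (hSk_le m hm)) (pow_pos (hvpos x hx) m)⟩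

theorem stmt7 (n k : ℕ) (hk : 1 ≤ k) (hkn : k ≤ n)
    (Ω : Set (E n)) (hΩ : IsOpen Ω) (v : E n → ℝ)
    (hv : ContDiffOn ℝ 2 v Ω) (hvpos : ∀ x ∈ Ω, 0 < v x)
    (hvG : ∀ x ∈ Ω, eigs (Amat v x) ∈ GammaK n k) :
    ∀ x ∈ Ω,
      (∀ m, 1 ≤ m → m ≤ k → Sk n m (Amat v x) ≤ v x ^ m * Sk n m (hess v x)) ∧
      (∀ m, m ≤ k → 0 ≤ Sk n m (hess v x)) :=
  stmt7_general n k Ω hΩ v hv hvpos hvG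
end
end

section
/- Let u be a positive C² function on B₃ ⊆ ℝⁿ with λ(A(u)) ∈ Γ_k pointwise, 1 ≤ k ≤ n/2. Then there is a constant C depending only on n and k such that sup_{B₁} u ≤ C·‖u‖_{L¹(B₂)}. -/
/-!
By the `k = 1` condition, `0 ≤ σ₁(λ(A(u))) = tr A(u) = u Δu - (n/2) |∇u|²`, so the positive
function `u` is subharmonic, and the estimate is the mean value inequality for nonnegative
subharmonic functions. For `x₀ ∈ B₁` and small `r`, apply Green's identity
`∫ u Δφ = ∫ φ Δu ≥ 0` to `φ(y) = χ(s) G(r² + s)`, `s = |y - x₀|²`, where `G(t) = ∫_t^1 τ^(-n/2) dτ`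
(so that `G(|y|²)` is the fundamental solution) and the cutoff `χ` is `1` for `s ≤ 1/2` and `0`
for `s ≥ 3/4`. Where `χ = 1` we have `Δφ = -2n r² (r² + s)^(-n/2-1) ≤ 0`, which is `≤ -c r^(-n)`
on `B_r(x₀)`; where `χ` varies, `Δφ` is bounded independently of `r`. Hence
`r^(-n) ∫_{B_r(x₀)} u ≤ C ∫_{B₂} u`, and letting `r → 0` gives `u(x₀) ≤ C ∫_{B₂} u`.
In the code `p` stands for `r²` and radial functions are written in the variable `s`.
-/

open scoped BigOperators Classical
open MeasureTheory

noncomputable section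

open Metric Set Filter Topology

variable {n : ℕ}

theorem pd_eq_of_hasFDerivAt {u : E n → ℝ} {u' : E n →L[ℝ] ℝ} {x : E n}
    (h : HasFDerivAt u u' x) (i : Fin n) : pd u i x = u' (EuclideanSpace.single i 1) := by
  rw [pd, h.fderiv]

theorem contDiffOn_pd {m : ℕ} {u : E n → ℝ} {U : Set (E n)} (hu : ContDiffOn ℝ (m + 1) u U)
    (hU : IsOpen U) (i : Fin n) : ContDiffOn ℝ m (pd u i) U :=
  (hu.fderiv_of_isOpen hU le_rfl).clm_apply contDiffOn_const

theorem continuousOn_pd_pd {u : E n → ℝ} {U : Set (E n)} (hu : ContDiffOn ℝ 2 u U)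
    (hU : IsOpen U) (i : Fin n) : ContinuousOn (pd (pd u i) i) U :=
  (contDiffOn_pd (contDiffOn_pd hu hU i : ContDiffOn ℝ (0 + 1) _ _) hU i).continuousOn

theorem continuousOn_trace_hess {u : E n → ℝ} {U : Set (E n)} (hu : ContDiffOn ℝ 2 u U)
    (hU : IsOpen U) : ContinuousOn (fun x => (hess u x).trace) U :=
  continuousOn_finsetSum _ fun i _ => continuousOn_pd_pd hu hU i

theorem hess_apply_eq_fderiv_fderiv {u : E n → ℝ} {x : E n} (hu : ContDiffAt ℝ 2 u x)
    (i j : Fin n) :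
    hess u x i j =
      fderiv ℝ (fderiv ℝ u) x (EuclideanSpace.single i 1) (EuclideanSpace.single j 1) := by
  have hdiff : DifferentiableAt ℝ (fderiv ℝ u) x :=
    (hu.fderiv_right (m := 1) le_rfl).differentiableAt one_ne_zero
  exact pd_eq_of_hasFDerivAt ((ContinuousLinearMap.apply ℝ ℝ
    (EuclideanSpace.single j (1 : ℝ))).hasFDerivAt.comp x hdiff.hasFDerivAt) i

theorem hess_symm {u : E n → ℝ} {x : E n} (hu : ContDiffAt ℝ 2 u x) (i j : Fin n) :
    hess u x i j = hess u x j i := by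
  rw [hess_apply_eq_fderiv_fderiv hu, hess_apply_eq_fderiv_fderiv hu]
  exact hu.isSymmSndFDerivAt (by simp) _ _

theorem esymm_one_eigs {M : Matrix (Fin n) (Fin n) ℝ} (hM : M.IsHermitian) :
    esymm n 1 (eigs M) = M.trace := by
  rw [esymm, Finset.powersetCard_one, Finset.sum_map, eigs, dif_pos hM,
    hM.trace_eq_sum_eigenvalues]
  simp

theorem trace_Amat (u : E n → ℝ) (x : E n) :
    (Amat u x).trace = u x * (hess u x).trace - n / 2 * gradsq u x := by
  simp only [Matrix.trace, Matrix.diag, Amat, Matrix.of_apply, if_pos, mul_one,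
    Finset.sum_sub_distrib, ← Finset.mul_sum, Finset.sum_const, Finset.card_univ,
    Fintype.card_fin, nsmul_eq_mul]
  ring

theorem trace_hess_nonneg_of_mem_GammaK {k : ℕ} (hk : 1 ≤ k) {u : E n → ℝ} {x : E n}
    (hu : ContDiffAt ℝ 2 u x) (hux : 0 < u x) (hA : eigs (Amat u x) ∈ GammaK n k) :
    0 ≤ (hess u x).trace := by
  have hherm : (Amat u x).IsHermitian := by
    ext i j
    simp [Amat, hess_symm hu i j, eq_comm]
  have hσ₁ := hA 1 le_rfl hk
  rw [esymm_one_eigs hherm, trace_Amat] at hσ₁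
  have : 0 ≤ (n : ℝ) / 2 * gradsq u x :=
    mul_nonneg (by positivity) (Finset.sum_nonneg fun i _ => sq_nonneg _)
  by_contra! h
  nlinarith

section Green

theorem integrable_of_continuousOn_of_eq_zero {U K : Set (E n)} {f : E n → ℝ}
    (hf : ContinuousOn f U) (hK : IsCompact K) (hKU : K ⊆ U) (h0 : ∀ x ∉ K, f x = 0) :
    Integrable f :=
  ((hf.mono hKU).integrableOn_compact hK).integrable_of_forall_notMem_eq_zero h0

theorem pd_eq_zero_of_notMem_tsupport {φ : E n → ℝ} {x : E n} (hx : x ∉ tsupport φ)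
    (i : Fin n) : pd φ i x = 0 := by
  simp [pd, fderiv_of_notMem_tsupport ℝ hx]

theorem pd_pd_eq_zero_of_notMem_tsupport {φ : E n → ℝ} {x : E n} (hx : x ∉ tsupport φ)
    (i j : Fin n) : pd (pd φ i) j x = 0 :=
  pd_eq_zero_of_notMem_tsupport (fun h => hx (tsupport_fderiv_apply_subset ℝ _ h)) j

variable {U : Set (E n)} {u φ : E n → ℝ}

theorem integral_mul_pd_pd_eq (hU : IsOpen U) (hu : ContDiffOn ℝ 2 u U) (hφ : ContDiff ℝ 2 φ)
    (hφc : HasCompactSupport φ) (hφU : tsupport φ ⊆ U) (i : Fin n) :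
    ∫ x, u x * pd (pd φ i) i x = ∫ x, φ x * pd (pd u i) i x := by
  have hφ' := hφ.contDiffOn (s := univ)
  have hφ₁ := contDiffOn_pd hφ' isOpen_univ i
  have hu₁ := contDiffOn_pd hu hU i
  have hint : ∀ {f g : E n → ℝ}, ContinuousOn f U → ContinuousOn g U →
      (∀ x ∉ tsupport φ, g x = 0) → Integrable fun x => f x * g x := fun hf hg hg0 =>
    integrable_of_continuousOn_of_eq_zero (hf.mul hg) hφc hφU fun x hx => by simp [hg0 x hx]
  have hint' : ∀ {f g : E n → ℝ}, ContinuousOn f U → ContinuousOn g U →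
      (∀ x ∉ tsupport φ, f x = 0) → Integrable fun x => f x * g x := fun hf hg hf0 => by
    simpa only [mul_comm] using hint hg hf hf0
  have hdiff : ∀ {f : E n → ℝ} {V : Set (E n)}, IsOpen V → ContDiffOn ℝ 1 f V →
      ∀ x ∈ V, DifferentiableAt ℝ f x := fun hV hf x hx =>
    (hf.differentiableOn one_ne_zero x hx).differentiableAt (hV.mem_nhds hx)
  have hφ0 : ∀ x ∉ tsupport φ, φ x = 0 := fun x hx => image_eq_zero_of_notMem_tsupport hx
  have hφ₁0 : ∀ x ∉ tsupport φ, pd φ i x = 0 := fun x hx => pd_eq_zero_of_notMem_tsupport hx i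
  have hφ₂0 : ∀ x ∉ tsupport φ, pd (pd φ i) i x = 0 := fun x hx =>
    pd_pd_eq_zero_of_notMem_tsupport hx i i
  have hφc₀ := hφ'.continuousOn.mono (subset_univ U)
  have hφc₁ := hφ₁.continuousOn.mono (subset_univ U)
  have hφc₂ := (continuousOn_pd_pd hφ' isOpen_univ i).mono (subset_univ U)
  calc ∫ x, u x * pd (pd φ i) i x
      = -∫ x, pd u i x * pd φ i x :=
        integral_mul_fderiv_eq_neg_fderiv_mul_of_integrable
          (hint hu₁.continuousOn hφc₁ hφ₁0) (hint hu.continuousOn hφc₂ hφ₂0)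
          (hint hu.continuousOn hφc₁ hφ₁0)
          (fun x hx => hdiff hU (hu.of_le (by norm_num)) x
            (hφU (tsupport_fderiv_apply_subset ℝ _ hx)))
          (fun x _ => hdiff isOpen_univ hφ₁ x (mem_univ x))
    _ = ∫ x, φ x * pd (pd u i) i x := by
        simp_rw [mul_comm (pd u i _)]
        exact (integral_mul_fderiv_eq_neg_fderiv_mul_of_integrable
          (hint' hφc₁ hu₁.continuousOn hφ₁0) (hint' hφc₀ (continuousOn_pd_pd hu hU i) hφ0)
          (hint' hφc₀ hu₁.continuousOn hφ0)
          (fun x _ => hdiff isOpen_univ (hφ'.of_le (by norm_num)) x (mem_univ x))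
          (fun x hx => hdiff hU hu₁ x (hφU hx))).symm

theorem integral_mul_trace_hess_comm (hU : IsOpen U) (hu : ContDiffOn ℝ 2 u U)
    (hφ : ContDiff ℝ 2 φ) (hφc : HasCompactSupport φ) (hφU : tsupport φ ⊆ U) :
    ∫ x, u x * (hess φ x).trace = ∫ x, φ x * (hess u x).trace := by
  have hφ' := hφ.contDiffOn (s := univ)
  have hint₁ : ∀ i, Integrable fun x => u x * pd (pd φ i) i x := fun i =>
    integrable_of_continuousOn_of_eq_zero
      (hu.continuousOn.mul ((continuousOn_pd_pd hφ' isOpen_univ i).mono (subset_univ _)))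
      hφc hφU fun x hx => by rw [pd_pd_eq_zero_of_notMem_tsupport hx, mul_zero]
  have hint₂ : ∀ i, Integrable fun x => φ x * pd (pd u i) i x := fun i =>
    integrable_of_continuousOn_of_eq_zero
      (hφ.continuous.continuousOn.mul (continuousOn_pd_pd hu hU i)) hφc hφU fun x hx => by
        rw [image_eq_zero_of_notMem_tsupport hx, zero_mul]
  simp only [Matrix.trace, Matrix.diag, hess, Matrix.of_apply, Finset.mul_sum]
  rw [integral_finsetSum _ fun i _ => hint₁ i, integral_finsetSum _ fun i _ => hint₂ i]
  exact Finset.sum_congr rfl fun i _ => integral_mul_pd_pd_eq hU hu hφ hφc hφU i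

end Green

def radialLaplacian (n : ℕ) (f : ℝ → ℝ) (s : ℝ) : ℝ :=
  4 * s * deriv (deriv f) s + 2 * n * deriv f s

section Radial

variable {f : ℝ → ℝ} (x₀ : E n)

theorem hasFDerivAt_norm_sub_sq (y : E n) :
    HasFDerivAt (fun y : E n => ‖y - x₀‖ ^ 2) (2 • innerSL ℝ (y - x₀)) y := by
  simpa using ((hasFDerivAt_id y).sub_const x₀).norm_sq

theorem pd_comp_norm_sub_sq (hf : ∀ s, 0 ≤ s → DifferentiableAt ℝ f s) (i : Fin n) :
    pd (fun y => f (‖y - x₀‖ ^ 2)) i =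
      fun y => deriv f (‖y - x₀‖ ^ 2) * (2 * (y i - x₀ i)) := by
  ext y
  refine (pd_eq_of_hasFDerivAt (u := fun y => f (‖y - x₀‖ ^ 2))
    ((hf _ (by positivity)).hasDerivAt.comp_hasFDerivAt y (hasFDerivAt_norm_sub_sq x₀ y))
    i).trans ?_
  simp [EuclideanSpace.inner_single_right]

variable {x₀}

theorem contDiff_comp_norm_sub_sq (hf : ∀ s, 0 ≤ s → ContDiffAt ℝ 2 f s) :
    ContDiff ℝ 2 fun y : E n => f (‖y - x₀‖ ^ 2) :=
  contDiff_iff_contDiffAt.2 fun y => (hf _ (by positivity)).comp y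
    ((contDiff_norm_sq ℝ).comp (contDiff_id.sub contDiff_const)).contDiffAt

theorem trace_hess_comp_norm_sub_sq (hf : ∀ s, 0 ≤ s → ContDiffAt ℝ 2 f s) (y : E n) :
    (hess (fun y => f (‖y - x₀‖ ^ 2)) y).trace =
      radialLaplacian n f (‖y - x₀‖ ^ 2) := by
  have hs : 0 ≤ ‖y - x₀‖ ^ 2 := by positivity
  have hf' : HasDerivAt (deriv f) (deriv (deriv f) (‖y - x₀‖ ^ 2)) (‖y - x₀‖ ^ 2) :=
    (((hf _ hs).derivWithin (m := 1) (by norm_num)).differentiableAt one_ne_zero).hasDerivAt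
  have hpd : ∀ i : Fin n, pd (pd (fun y => f (‖y - x₀‖ ^ 2)) i) i y =
      4 * (y i - x₀ i) ^ 2 * deriv (deriv f) (‖y - x₀‖ ^ 2)
        + 2 * deriv f (‖y - x₀‖ ^ 2) := by
    intro i
    rw [pd_comp_norm_sub_sq x₀ (fun s hs => (hf s hs).differentiableAt two_ne_zero)]
    have hlin : HasFDerivAt (fun y : E n => 2 * (y i - x₀ i))
        ((2 : ℝ) • EuclideanSpace.proj (𝕜 := ℝ) i) y :=
      ((EuclideanSpace.proj (𝕜 := ℝ) i).hasFDerivAt.sub_const (x₀ i)).const_mul 2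
    have hcomp : HasFDerivAt (fun y => deriv f (‖y - x₀‖ ^ 2)) _ y :=
      HasDerivAt.comp_hasFDerivAt (f := fun y : E n => ‖y - x₀‖ ^ 2) y hf'
        (hasFDerivAt_norm_sub_sq x₀ y)
    refine (pd_eq_of_hasFDerivAt (hcomp.fun_mul hlin) i).trans ?_
    simp [EuclideanSpace.inner_single_right]
    ring
  have hsum : ∑ i, (y i - x₀ i) ^ 2 = ‖y - x₀‖ ^ 2 := by
    simp [EuclideanSpace.real_norm_sq_eq]
  calc (hess (fun y => f (‖y - x₀‖ ^ 2)) y).trace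
      = ∑ i, pd (pd (fun y => f (‖y - x₀‖ ^ 2)) i) i y := rfl
    _ = radialLaplacian n f (‖y - x₀‖ ^ 2) := by
      simp only [hpd, Finset.sum_add_distrib, ← Finset.sum_mul, ← Finset.mul_sum, hsum,
        Finset.sum_const, Finset.card_univ, Fintype.card_fin, nsmul_eq_mul, radialLaplacian]
      ring

end Radial

theorem deriv_eq_zero_and_deriv_deriv_eq_zero_of_eventuallyEq_const {f : ℝ → ℝ} {s c : ℝ}
    (h : f =ᶠ[𝓝 s] fun _ => c) : deriv f s = 0 ∧ deriv (deriv f) s = 0 := by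
  have h' : deriv f =ᶠ[𝓝 s] fun _ => 0 := h.deriv.trans (by simp)
  exact ⟨h'.eq_of_nhds, h'.deriv.eq_of_nhds.trans (by simp)⟩

def cutoff (s : ℝ) : ℝ := Real.smoothTransition (3 - 4 * s)

theorem contDiff_cutoff : ContDiff ℝ 2 cutoff :=
  Real.smoothTransition.contDiff.comp (by fun_prop)

theorem cutoff_nonneg (s : ℝ) : 0 ≤ cutoff s := Real.smoothTransition.nonneg _

theorem cutoff_eq_one {s : ℝ} (hs : s ≤ 1 / 2) : cutoff s = 1 :=
  Real.smoothTransition.one_of_one_le (by linarith)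

theorem cutoff_eq_zero {s : ℝ} (hs : 3 / 4 ≤ s) : cutoff s = 0 :=
  Real.smoothTransition.zero_of_nonpos (by linarith)

theorem deriv_cutoff_eq_zero {s : ℝ} (hs : s ∉ Icc (1 / 2) (3 / 4)) :
    deriv cutoff s = 0 ∧ deriv (deriv cutoff) s = 0 := by
  simp only [mem_Icc, not_and_or, not_le] at hs
  rcases hs with hs | hs
  · exact deriv_eq_zero_and_deriv_deriv_eq_zero_of_eventuallyEq_const (c := 1)
      (eventually_of_mem (Iio_mem_nhds hs) fun t ht => cutoff_eq_one (le_of_lt ht))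
  · exact deriv_eq_zero_and_deriv_deriv_eq_zero_of_eventuallyEq_const (c := 0)
      (eventually_of_mem (Ioi_mem_nhds hs) fun t ht => cutoff_eq_zero (le_of_lt ht))

theorem exists_abs_deriv_cutoff_le :
    ∃ K, ∀ s, |deriv cutoff s| ≤ K ∧ |deriv (deriv cutoff) s| ≤ K := by
  have hsupp : ∀ g : ℝ → ℝ, (∀ s ∉ Icc (1 / 2 : ℝ) (3 / 4), g s = 0) →
      HasCompactSupport g := fun _ hg => HasCompactSupport.intro isCompact_Icc hg
  obtain ⟨K₁, hK₁⟩ := (contDiff_cutoff.continuous_deriv one_le_two)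
    |>.bounded_above_of_compact_support (hsupp _ fun s hs => (deriv_cutoff_eq_zero hs).1)
  obtain ⟨K₂, hK₂⟩ := (contDiff_cutoff.deriv' (n := 1)).continuous_deriv_one
    |>.bounded_above_of_compact_support (hsupp _ fun s hs => (deriv_cutoff_eq_zero hs).2)
  exact ⟨max K₁ K₂, fun s =>
    ⟨(hK₁ s).trans (le_max_left _ _), (hK₂ s).trans (le_max_right _ _)⟩⟩

section GreenKernel

def greenKernel (n : ℕ) (t : ℝ) : ℝ := ∫ τ in t..1, τ ^ (-(n : ℝ) / 2)

variable (n)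

theorem hasDerivAt_greenKernel {t : ℝ} (ht : 0 < t) :
    HasDerivAt (greenKernel n) (-t ^ (-(n : ℝ) / 2)) t := by
  have h : greenKernel n = fun t => -∫ τ in (1 : ℝ)..t, τ ^ (-(n : ℝ) / 2) := by
    funext t; rw [greenKernel, intervalIntegral.integral_symm]
  rw [h]
  exact (intervalIntegral.integral_hasDerivAt_right
    (intervalIntegral.intervalIntegrable_rpow (Or.inr (notMem_uIcc_of_lt one_pos ht)))
    (ContinuousOn.stronglyMeasurableAtFilter isOpen_Ioi (fun τ hτ =>
      (Real.continuousAt_rpow_const τ _ (Or.inl (ne_of_gt hτ))).continuousWithinAt) t ht)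
    (Real.continuousAt_rpow_const t _ (Or.inl ht.ne'))).neg

theorem contDiffOn_greenKernel : ContDiffOn ℝ 2 (greenKernel n) (Ioi 0) := by
  rw [show (2 : WithTop ℕ∞) = 1 + 1 from rfl, contDiffOn_succ_iff_deriv_of_isOpen isOpen_Ioi]
  refine ⟨fun t ht => (hasDerivAt_greenKernel n ht).differentiableAt.differentiableWithinAt,
    by simp, ?_⟩
  refine ContDiffOn.congr (f := fun t => -t ^ (-(n : ℝ) / 2)) (fun t ht => ?_)
    fun t ht => (hasDerivAt_greenKernel n ht).deriv
  exact (Real.contDiffAt_rpow_const_of_ne (ne_of_gt ht)).neg.contDiffWithinAt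

theorem greenKernel_nonneg {t : ℝ} (ht : 0 < t) (ht1 : t ≤ 1) : 0 ≤ greenKernel n t :=
  intervalIntegral.integral_nonneg ht1 fun _ hτ => Real.rpow_nonneg (ht.le.trans hτ.1) _

theorem greenKernel_le {t : ℝ} (ht : 1 / 2 ≤ t) :
    greenKernel n t ≤ greenKernel n (1 / 2) := by
  have h := intervalIntegral.integral_add_adjacent_intervals
    (intervalIntegral.intervalIntegrable_rpow (μ := volume) (r := -(n : ℝ) / 2)
      (Or.inr (notMem_uIcc_of_lt (by norm_num : (0 : ℝ) < 1 / 2) (by linarith))))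
    (intervalIntegral.intervalIntegrable_rpow (Or.inr (notMem_uIcc_of_lt (by linarith) one_pos)))
  have hnonneg : 0 ≤ ∫ τ in (1 / 2 : ℝ)..t, τ ^ (-(n : ℝ) / 2) :=
    intervalIntegral.integral_nonneg ht fun _ hτ => Real.rpow_nonneg (by linarith [hτ.1]) _
  rw [greenKernel, greenKernel, ← h]
  linarith

end GreenKernel

section MollifiedGreen

def mollifiedGreen (n : ℕ) (p s : ℝ) : ℝ := cutoff s * greenKernel n (p + s)

variable {p s : ℝ}

theorem hasDerivAt_greenKernel_add (hps : 0 < p + s) :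
    HasDerivAt (fun s => greenKernel n (p + s)) (-(p + s) ^ (-(n : ℝ) / 2)) s :=
  (hasDerivAt_greenKernel n hps).comp_const_add p s

theorem hasDerivAt_rpow_add (a : ℝ) (hps : 0 < p + s) :
    HasDerivAt (fun s => (p + s) ^ a) (a * (p + s) ^ (a - 1)) s :=
  (Real.hasDerivAt_rpow_const (p := a) (Or.inl hps.ne')).comp_const_add p s

theorem contDiffAt_mollifiedGreen (hps : 0 < p + s) : ContDiffAt ℝ 2 (mollifiedGreen n p) s :=
  contDiff_cutoff.contDiffAt.mul
    (((contDiffOn_greenKernel n).contDiffAt (Ioi_mem_nhds hps)).comp s (by fun_prop))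

theorem radialLaplacian_mollifiedGreen (hps : 0 < p + s) :
    radialLaplacian n (mollifiedGreen n p) s =
      -(2 * n * p * cutoff s * (p + s) ^ (-(n : ℝ) / 2 - 1))
      + deriv cutoff s * (2 * n * greenKernel n (p + s) - 8 * s * (p + s) ^ (-(n : ℝ) / 2))
      + 4 * s * deriv (deriv cutoff) s * greenKernel n (p + s) := by
  have hχ : ∀ s, HasDerivAt cutoff (deriv cutoff s) s := fun s =>
    (contDiff_cutoff.differentiable two_ne_zero s).hasDerivAt
  have hχ' : HasDerivAt (deriv cutoff) (deriv (deriv cutoff) s) s :=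
    (contDiff_cutoff.differentiable_deriv_two s).hasDerivAt
  have hF : ∀ s, 0 < p + s → HasDerivAt (mollifiedGreen n p)
      (deriv cutoff s * greenKernel n (p + s) - cutoff s * (p + s) ^ (-(n : ℝ) / 2)) s :=
    fun s hps => ((hχ s).mul (hasDerivAt_greenKernel_add hps)).congr_deriv (by ring)
  have hderiv : deriv (mollifiedGreen n p) =ᶠ[𝓝 s] fun s =>
      deriv cutoff s * greenKernel n (p + s) - cutoff s * (p + s) ^ (-(n : ℝ) / 2) :=
    eventually_of_mem (Ioi_mem_nhds (by linarith : -p < s)) fun t ht =>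
      (hF t (by linarith [mem_Ioi.1 ht])).deriv
  have hF' : HasDerivAt (fun s =>
      deriv cutoff s * greenKernel n (p + s) - cutoff s * (p + s) ^ (-(n : ℝ) / 2)) _ s :=
    (hχ'.fun_mul (hasDerivAt_greenKernel_add hps)).fun_sub
      ((hχ s).fun_mul (hasDerivAt_rpow_add _ hps))
  rw [radialLaplacian, hderiv.deriv_eq, hF'.deriv, (hF s hps).deriv,
    Real.rpow_sub_one hps.ne']
  field_simp
  ring

end MollifiedGreen

section Estimates

variable {p s : ℝ}

theorem mollifiedGreen_eq_zero (hs : 3 / 4 ≤ s) : mollifiedGreen n p s = 0 := by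
  rw [mollifiedGreen, cutoff_eq_zero hs, zero_mul]

theorem mollifiedGreen_nonneg (hp : 0 < p) (hp4 : p ≤ 1 / 4) (hs : 0 ≤ s) :
    0 ≤ mollifiedGreen n p s := by
  rcases lt_or_ge s (3 / 4) with hs' | hs'
  · exact mul_nonneg (cutoff_nonneg s) (greenKernel_nonneg n (by linarith) (by linarith))
  · rw [mollifiedGreen_eq_zero hs']

theorem radialLaplacian_mollifiedGreen_eq_zero (hp : 0 < p) (hs : 3 / 4 < s) :
    radialLaplacian n (mollifiedGreen n p) s = 0 := by
  obtain ⟨h₁, h₂⟩ := deriv_cutoff_eq_zero (fun h => (not_le.2 hs) h.2)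
  rw [radialLaplacian_mollifiedGreen (by linarith), cutoff_eq_zero hs.le, h₁, h₂]
  ring

theorem le_neg_radialLaplacian_mollifiedGreen (hp : 0 < p) (hp4 : p ≤ 1 / 4) (hs : 0 ≤ s)
    (hsp : s ≤ p) :
    n * 2 ^ (-(n : ℝ) / 2) * p ^ (-(n : ℝ) / 2) ≤
      -radialLaplacian n (mollifiedGreen n p) s := by
  obtain ⟨h₁, h₂⟩ :=
    deriv_cutoff_eq_zero (fun h => (not_le.2 (by linarith : s < 1 / 2)) h.1)
  have hps : 0 < p + s := by linarith
  have hmono : (2 * p) ^ (-(n : ℝ) / 2 - 1) ≤ (p + s) ^ (-(n : ℝ) / 2 - 1) :=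
    Real.rpow_le_rpow_of_nonpos hps (by linarith) (by linarith [n.cast_nonneg (α := ℝ)])
  have h2p : n * 2 ^ (-(n : ℝ) / 2) * p ^ (-(n : ℝ) / 2) =
      2 * n * p * (2 * p) ^ (-(n : ℝ) / 2 - 1) := by
    rw [Real.rpow_sub_one (by positivity), Real.mul_rpow zero_le_two hp.le]
    field_simp
  rw [radialLaplacian_mollifiedGreen hps, cutoff_eq_one (by linarith), h₁, h₂, h2p]
  nlinarith [mul_le_mul_of_nonneg_left hmono (by positivity : (0 : ℝ) ≤ 2 * n * p)]

theorem radialLaplacian_mollifiedGreen_le {K₀ : ℝ}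
    (hK₀ : ∀ s, |deriv cutoff s| ≤ K₀ ∧ |deriv (deriv cutoff) s| ≤ K₀) (hp : 0 < p)
    (hp4 : p ≤ 1 / 4) (hs : 0 ≤ s) :
    radialLaplacian n (mollifiedGreen n p) s ≤
      K₀ * (2 * n * greenKernel n (1 / 2) + 8 * (1 / 2) ^ (-(n : ℝ) / 2)
        + 4 * greenKernel n (1 / 2)) := by
  have hK₀0 : 0 ≤ K₀ := (abs_nonneg _).trans (hK₀ 0).1
  set G₀ := greenKernel n (1 / 2)
  set P₀ : ℝ := (1 / 2) ^ (-(n : ℝ) / 2)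
  have hG₀ : 0 ≤ G₀ := greenKernel_nonneg n (by norm_num) (by norm_num)
  have hn : (0 : ℝ) ≤ n := Nat.cast_nonneg n
  have hps : 0 < p + s := by linarith
  have hpole : 0 ≤ 2 * n * p * cutoff s * (p + s) ^ (-(n : ℝ) / 2 - 1) := by
    have := cutoff_nonneg s
    positivity
  rw [radialLaplacian_mollifiedGreen hps]
  by_cases hmid : s ∈ Icc (1 / 2) (3 / 4)
  · obtain ⟨hs₁, hs₂⟩ := hmid
    have hG := greenKernel_le n (by linarith : 1 / 2 ≤ p + s)
    have hG' := greenKernel_nonneg n hps (by linarith)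
    have hP : (p + s) ^ (-(n : ℝ) / 2) ≤ P₀ :=
      Real.rpow_le_rpow_of_nonpos (by norm_num) (by linarith) (by linarith)
    have hP' : 0 ≤ (p + s) ^ (-(n : ℝ) / 2) := by positivity
    have h₂ : deriv cutoff s *
        (2 * n * greenKernel n (p + s) - 8 * s * (p + s) ^ (-(n : ℝ) / 2))
        ≤ K₀ * (2 * n * G₀ + 8 * P₀) := by
      refine (le_abs_self _).trans ?_
      rw [abs_mul]
      refine mul_le_mul (hK₀ s).1 (abs_sub_le_iff.2 ⟨?_, ?_⟩) (abs_nonneg _) hK₀0 <;>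
        nlinarith [mul_nonneg hn hG', mul_nonneg hs hP', mul_le_mul_of_nonneg_left hG hn]
    have h₃ : 4 * s * deriv (deriv cutoff) s * greenKernel n (p + s) ≤ K₀ * (4 * G₀) := by
      have : deriv (deriv cutoff) s * greenKernel n (p + s) ≤ K₀ * G₀ :=
        (mul_le_mul_of_nonneg_right ((le_abs_self _).trans (hK₀ s).2) hG').trans
          (mul_le_mul_of_nonneg_left hG hK₀0)
      nlinarith [mul_nonneg hK₀0 hG₀]
    linarith
  · obtain ⟨h₁, h₂⟩ := deriv_cutoff_eq_zero hmid
    rw [h₁, h₂]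
    have : 0 ≤ K₀ * (2 * n * G₀ + 8 * P₀ + 4 * G₀) := by positivity
    linarith

theorem exists_radialLaplacian_mollifiedGreen_le :
    ∃ K > 0, ∀ p s, 0 < p → p ≤ 1 / 4 → 0 ≤ s →
      radialLaplacian n (mollifiedGreen n p) s ≤ K := by
  obtain ⟨K₀, hK₀⟩ := exists_abs_deriv_cutoff_le
  have hK₀0 : 0 ≤ K₀ := (abs_nonneg _).trans (hK₀ 0).1
  have hG₀ : 0 ≤ greenKernel n (1 / 2) := greenKernel_nonneg n (by norm_num) (by norm_num)
  exact ⟨_ + 1, by positivity, fun p s hp hp4 hs =>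
    (radialLaplacian_mollifiedGreen_le hK₀ hp hp4 hs).trans (le_add_of_nonneg_right one_pos.le)⟩

end Estimates

theorem mul_volume_ball_le_of_setIntegral_ball_le {u : E n → ℝ} {x₀ : E n} {R A : ℝ}
    (hR : 0 < R) (hu : ContinuousAt u x₀)
    (hint : ∀ r, 0 < r → r ≤ R → IntegrableOn u (ball x₀ r))
    (hA : ∀ r, 0 < r → r ≤ R → ∫ y in ball x₀ r, u y ≤ A * r ^ n) :
    u x₀ * volume.real (ball (0 : E n) 1) ≤ A := by
  set v := volume.real (ball (0 : E n) 1)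
  have hv : 0 < v := ENNReal.toReal_pos (measure_ball_pos volume 0 one_pos).ne'
    measure_ball_lt_top.ne
  refine le_of_forall_sub_le fun ε hε => ?_
  obtain ⟨δ, hδ, hδu⟩ := Metric.continuousAt_iff.1 hu (ε / v) (by positivity)
  set r := min δ R
  have hr : 0 < r := lt_min hδ hR
  have hlow : ∀ y ∈ ball x₀ r, u x₀ - ε / v ≤ u y := fun y hy => by
    have := hδu (lt_of_lt_of_le (mem_ball.1 hy) (min_le_left _ _))
    rw [Real.dist_eq, abs_sub_lt_iff] at this
    linarith
  have hvol : volume.real (ball x₀ r) = r ^ n * v := by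
    rw [measureReal_def, Measure.addHaar_ball_of_pos _ _ hr, ENNReal.toReal_mul,
      ENNReal.toReal_ofReal (by positivity), finrank_euclideanSpace_fin]
    rfl
  have h := (setIntegral_ge_of_const_le_real measurableSet_ball measure_ball_lt_top.ne hlow
    (hint r hr (min_le_right _ _))).trans (hA r hr (min_le_right _ _))
  rw [hvol] at h
  have hrn : 0 < r ^ n := pow_pos hr n
  refine le_of_mul_le_mul_right ?_ hrn
  calc (u x₀ * v - ε) * r ^ n = (u x₀ - ε / v) * (r ^ n * v) := by field_simp
    _ ≤ A * r ^ n := h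

theorem sq_rpow_neg_div_two {r : ℝ} (hr : 0 ≤ r) :
    (r ^ 2) ^ (-(n : ℝ) / 2) = (r ^ n)⁻¹ := by
  rw [neg_div, Real.rpow_neg (by positivity), ← Real.rpow_natCast r 2, ← Real.rpow_mul hr,
    ← Real.rpow_natCast r n]
  congr 2
  push_cast
  ring

section MeanValue

def mollifiedGreenAt (n : ℕ) (p : ℝ) (x₀ y : E n) : ℝ :=
  mollifiedGreen n p (‖y - x₀‖ ^ 2)

variable {p : ℝ} {x₀ y : E n}

theorem contDiff_mollifiedGreenAt (hp : 0 < p) : ContDiff ℝ 2 (mollifiedGreenAt n p x₀) :=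
  contDiff_comp_norm_sub_sq fun _ hs => contDiffAt_mollifiedGreen (by linarith)

theorem trace_hess_mollifiedGreenAt (hp : 0 < p) (y : E n) :
    (hess (mollifiedGreenAt n p x₀) y).trace =
      radialLaplacian n (mollifiedGreen n p) (‖y - x₀‖ ^ 2) :=
  trace_hess_comp_norm_sub_sq (fun _ hs => contDiffAt_mollifiedGreen (by linarith)) y

theorem lt_norm_sub_sq_of_notMem_closedBall (hy : y ∉ closedBall x₀ 1) :
    3 / 4 < ‖y - x₀‖ ^ 2 := by
  rw [mem_closedBall, not_le, dist_eq_norm] at hy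
  nlinarith

theorem mollifiedGreenAt_eq_zero (hy : y ∉ closedBall x₀ 1) : mollifiedGreenAt n p x₀ y = 0 :=
  mollifiedGreen_eq_zero (lt_norm_sub_sq_of_notMem_closedBall hy).le

theorem trace_hess_mollifiedGreenAt_eq_zero (hp : 0 < p) (hy : y ∉ closedBall x₀ 1) :
    (hess (mollifiedGreenAt n p x₀) y).trace = 0 := by
  rw [trace_hess_mollifiedGreenAt hp,
    radialLaplacian_mollifiedGreen_eq_zero hp (lt_norm_sub_sq_of_notMem_closedBall hy)]

theorem tsupport_mollifiedGreenAt_subset :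
    tsupport (mollifiedGreenAt n p x₀) ⊆ closedBall x₀ 1 :=
  closure_minimal (fun _ hy => by_contra fun h => hy (mollifiedGreenAt_eq_zero h))
    isClosed_closedBall

theorem hasCompactSupport_mollifiedGreenAt : HasCompactSupport (mollifiedGreenAt n p x₀) :=
  HasCompactSupport.intro (isCompact_closedBall x₀ 1) fun _ hy => mollifiedGreenAt_eq_zero hy

theorem closedBall_subset_ball_of_mem_ball (hx₀ : x₀ ∈ ball (0 : E n) 1) {R : ℝ}
    (hR : 2 ≤ R) : closedBall x₀ 1 ⊆ ball 0 R :=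
  closedBall_subset_ball' (by linarith [mem_ball.1 hx₀])

variable {u : E n → ℝ}

theorem integral_mul_trace_hess_mollifiedGreenAt_nonneg (hu : ContDiffOn ℝ 2 u (ball 0 3))
    (hΔu : ∀ x ∈ ball (0 : E n) 3, 0 ≤ (hess u x).trace) (hx₀ : x₀ ∈ ball (0 : E n) 1)
    (hp : 0 < p) (hp4 : p ≤ 1 / 4) :
    0 ≤ ∫ y, u y * (hess (mollifiedGreenAt n p x₀) y).trace := by
  have hsupp : tsupport (mollifiedGreenAt n p x₀) ⊆ ball 0 3 :=
    tsupport_mollifiedGreenAt_subset.trans (closedBall_subset_ball_of_mem_ball hx₀ (by norm_num))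
  rw [integral_mul_trace_hess_comm isOpen_ball hu (contDiff_mollifiedGreenAt hp)
    hasCompactSupport_mollifiedGreenAt hsupp]
  refine integral_nonneg fun y => ?_
  by_cases hy : y ∈ ball (0 : E n) 3
  · exact mul_nonneg (mollifiedGreen_nonneg hp hp4 (by positivity)) (hΔu y hy)
  · simp [image_eq_zero_of_notMem_tsupport fun h => hy (hsupp h)]

theorem mul_trace_hess_mollifiedGreenAt_le {K r : ℝ}
    (hK : ∀ s, 0 ≤ s → radialLaplacian n (mollifiedGreen n (r ^ 2)) s ≤ K) (hK0 : 0 ≤ K)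
    (hu0 : ∀ x ∈ ball (0 : E n) 2, 0 ≤ u x) (hx₀ : x₀ ∈ ball (0 : E n) 1) (hr : 0 < r)
    (hr2 : r ≤ 1 / 2) (y : E n) :
    u y * (hess (mollifiedGreenAt n (r ^ 2) x₀) y).trace ≤ K * (ball 0 2).indicator u y
      - n * 2 ^ (-(n : ℝ) / 2) * (r ^ 2) ^ (-(n : ℝ) / 2) * (ball x₀ r).indicator u y := by
  have hp : 0 < r ^ 2 := by positivity
  have hp4 : r ^ 2 ≤ 1 / 4 := by nlinarith
  have hball := closedBall_subset_ball_of_mem_ball hx₀ le_rfl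
  rw [trace_hess_mollifiedGreenAt hp]
  by_cases hy : y ∈ closedBall x₀ 1
  · have hu : 0 ≤ u y := hu0 y (hball hy)
    have hL := mul_le_mul_of_nonneg_left (hK (‖y - x₀‖ ^ 2) (by positivity)) hu
    rw [indicator_of_mem (hball hy)]
    by_cases hyr : y ∈ ball x₀ r
    · have hinner := le_neg_radialLaplacian_mollifiedGreen (n := n) (s := ‖y - x₀‖ ^ 2)
        hp hp4 (by positivity)
        (by rw [← dist_eq_norm]; nlinarith [mem_ball.1 hyr, dist_nonneg (x := y) (y := x₀)])
      rw [indicator_of_mem hyr]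
      nlinarith [mul_le_mul_of_nonneg_left hinner hu]
    · rw [indicator_of_notMem hyr]
      linarith
  · have hyr : y ∉ ball x₀ r := fun h =>
      hy (closedBall_subset_closedBall (by linarith) (ball_subset_closedBall h))
    rw [radialLaplacian_mollifiedGreen_eq_zero hp (lt_norm_sub_sq_of_notMem_closedBall hy),
      indicator_of_notMem hyr, mul_zero, mul_zero, sub_zero]
    exact mul_nonneg hK0 (indicator_nonneg hu0 y)

theorem integral_mul_trace_hess_mollifiedGreenAt_le {K r : ℝ}
    (hK : ∀ s, 0 ≤ s → radialLaplacian n (mollifiedGreen n (r ^ 2)) s ≤ K) (hK0 : 0 ≤ K)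
    (hu : ContinuousOn u (ball 0 3)) (hu0 : ∀ x ∈ ball (0 : E n) 3, 0 ≤ u x)
    (hx₀ : x₀ ∈ ball (0 : E n) 1) (hr : 0 < r) (hr2 : r ≤ 1 / 2) :
    ∫ y, u y * (hess (mollifiedGreenAt n (r ^ 2) x₀) y).trace ≤
      K * (∫ y in ball 0 2, u y)
        - n * 2 ^ (-(n : ℝ) / 2) * (r ^ n)⁻¹ * ∫ y in ball x₀ r, u y := by
  have hp : 0 < r ^ 2 := by positivity
  have hintB : ∀ {s : Set (E n)}, s ⊆ ball 0 2 → IntegrableOn u s := fun hs =>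
    ((hu.mono (closedBall_subset_ball (by norm_num))).integrableOn_compact
      (isCompact_closedBall 0 2)).mono_set (hs.trans ball_subset_closedBall)
  have hsmall : ball x₀ r ⊆ ball 0 2 := ball_subset_closedBall.trans
    ((closedBall_subset_closedBall (by linarith)).trans
      (closedBall_subset_ball_of_mem_ball hx₀ le_rfl))
  have h₂ := ((hintB subset_rfl).integrable_indicator measurableSet_ball).const_mul K
  have hᵣ := ((hintB hsmall).integrable_indicator measurableSet_ball).const_mul
    (n * 2 ^ (-(n : ℝ) / 2) * (r ^ 2) ^ (-(n : ℝ) / 2))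
  have hint : Integrable fun y => u y * (hess (mollifiedGreenAt n (r ^ 2) x₀) y).trace :=
    integrable_of_continuousOn_of_eq_zero (hu.mul (((continuousOn_trace_hess
      (contDiff_mollifiedGreenAt hp).contDiffOn isOpen_univ)).mono (subset_univ _)))
      (isCompact_closedBall x₀ 1) (closedBall_subset_ball_of_mem_ball hx₀ (by norm_num))
      fun y hy => by rw [trace_hess_mollifiedGreenAt_eq_zero hp hy, mul_zero]
  refine (integral_mono hint (h₂.sub hᵣ)
    (mul_trace_hess_mollifiedGreenAt_le hK hK0 (fun x hx => hu0 x (ball_subset_ball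
      (by norm_num) hx)) hx₀ hr hr2)).trans_eq ?_
  simp only [Pi.sub_apply]
  rw [integral_sub h₂ hᵣ, integral_const_mul, integral_const_mul,
    integral_indicator measurableSet_ball, integral_indicator measurableSet_ball,
    sq_rpow_neg_div_two hr.le]

end MeanValue

theorem exists_setIntegral_ball_le_of_trace_hess_nonneg (hn : 0 < n) :
    ∃ C > 0, ∀ u : E n → ℝ, ContDiffOn ℝ 2 u (ball 0 3) →
      (∀ x ∈ ball (0 : E n) 3, 0 ≤ u x) →
      (∀ x ∈ ball (0 : E n) 3, 0 ≤ (hess u x).trace) →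
      ∀ x₀ ∈ ball (0 : E n) 1, ∀ r, 0 < r → r ≤ 1 / 2 →
        ∫ y in ball x₀ r, u y ≤ C * r ^ n * ∫ y in ball 0 2, u y := by
  obtain ⟨K, hK0, hK⟩ := exists_radialLaplacian_mollifiedGreen_le (n := n)
  have hm : 0 < (n : ℝ) * 2 ^ (-(n : ℝ) / 2) := by positivity
  refine ⟨K / (n * 2 ^ (-(n : ℝ) / 2)), by positivity,
    fun u hu hu0 hΔu x₀ hx₀ r hr hr2 => ?_⟩
  have hbound := (integral_mul_trace_hess_mollifiedGreenAt_nonneg hu hΔu hx₀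
    (by positivity : 0 < r ^ 2) (by nlinarith)).trans
    (integral_mul_trace_hess_mollifiedGreenAt_le (fun s hs => hK _ s (by positivity)
      (by nlinarith) hs) hK0.le hu.continuousOn hu0 hx₀ hr hr2)
  calc ∫ y in ball x₀ r, u y
      = n * 2 ^ (-(n : ℝ) / 2) * (r ^ n)⁻¹ * (∫ y in ball x₀ r, u y)
        * (r ^ n / (n * 2 ^ (-(n : ℝ) / 2))) := by field_simp
    _ ≤ K * (∫ y in ball 0 2, u y) * (r ^ n / (n * 2 ^ (-(n : ℝ) / 2))) :=
        mul_le_mul_of_nonneg_right (by linarith) (div_nonneg (by positivity) hm.le)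
    _ = K / (n * 2 ^ (-(n : ℝ) / 2)) * r ^ n * ∫ y in ball 0 2, u y := by ring

theorem stmt18 (n k : ℕ) (hk : 1 ≤ k) (hkn : 2 * k ≤ n) :
    ∃ C : ℝ, 0 < C ∧
      ∀ u : E n → ℝ, ContDiffOn ℝ 2 u (Metric.ball (0 : E n) 3) →
        (∀ x ∈ Metric.ball (0 : E n) 3, 0 < u x) →
        (∀ x ∈ Metric.ball (0 : E n) 3, eigs (Amat u x) ∈ GammaK n k) →
        ∀ x ∈ Metric.ball (0 : E n) 1,
          u x ≤ C * ∫ y in Metric.ball (0 : E n) 2, u y := by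
  obtain ⟨C, hC, hmean⟩ := exists_setIntegral_ball_le_of_trace_hess_nonneg (n := n) (by omega)
  have hv : 0 < volume.real (ball (0 : E n) 1) :=
    ENNReal.toReal_pos (measure_ball_pos volume 0 one_pos).ne' measure_ball_lt_top.ne
  refine ⟨C / volume.real (ball (0 : E n) 1), by positivity, fun u hu hpos hΓ x₀ hx₀ => ?_⟩
  have hx₀3 : x₀ ∈ ball (0 : E n) 3 := ball_subset_ball (by norm_num) hx₀
  have hsub : ∀ r, r ≤ 1 / 2 → closedBall x₀ r ⊆ ball (0 : E n) 3 := fun r hr y hy => by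
    rw [mem_ball] at *
    linarith [dist_triangle y x₀ 0, mem_closedBall.1 hy]
  have hΔu : ∀ x ∈ ball (0 : E n) 3, 0 ≤ (hess u x).trace := fun x hx =>
    trace_hess_nonneg_of_mem_GammaK hk (hu.contDiffAt (isOpen_ball.mem_nhds hx)) (hpos x hx)
      (hΓ x hx)
  have key := mul_volume_ball_le_of_setIntegral_ball_le (R := 1 / 2) (by norm_num)
    (hu.continuousOn.continuousAt (isOpen_ball.mem_nhds hx₀3))
    (fun r _ hr => ((hu.continuousOn.mono (hsub r hr)).integrableOn_compact
      (isCompact_closedBall x₀ r)).mono_set ball_subset_closedBall)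
    (fun r hr hr2 => (hmean u hu (fun x hx => (hpos x hx).le) hΔu x₀ hx₀ r hr hr2).trans_eq
      (mul_right_comm _ _ _))
  rwa [div_mul_eq_mul_div, le_div_iff₀ hv]
end
end
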